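/- Let I be a square-free monomial ideal in R = k[x_1,…,x_n]. Then I is an f-ideal if and only if its Newton complementary dual Î is an f-ideal. -/
import Mathlib


/-!
Encoding: a squarefree monomial of `k[x₁,…,xₙ]` is encoded by its support, a
`Finset (Fin n)` (the monomial `∏ i ∈ T, xᵢ` corresponds to `T`); its degree is
`T.card`, and divisibility of squarefree monomials is inclusion of supports.
A squarefree monomial ideal `I` is encoded by the antichain
`G : Finset (Finset (Fin n))` of supports of its unique minimal set of monomial
generators `G(I)`; the squarefree monomial with support `T` lies in `I` iff
`S ⊆ T` for some `S ∈ G`.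
-/

open Finset

/-- The squarefree monomial with support `T` belongs to the squarefree monomial
ideal with minimal generating supports `G`. -/
def memIdeal {n : ℕ} (G : Finset (Finset (Fin n))) (T : Finset (Fin n)) : Prop :=
  ∃ S ∈ G, S ⊆ T

/-- The Newton complementary dual `Î = ⟨(x₁⋯xₙ)/m : m ∈ G(I)⟩`: each minimal
generator support `S` is replaced by its complement `Sᶜ`, the support of
`(x₁⋯xₙ)/(∏ i ∈ S, xᵢ)`. -/
def ncDual {n : ℕ} (G : Finset (Finset (Fin n))) : Finset (Finset (Fin n)) :=
  G.image fun S => Sᶜ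

/-- `faceN G d` is the number of faces of cardinality `d` (i.e. of dimension
`d - 1`) of the non-face (Stanley–Reisner) complex `δ_N(I)`, whose faces are the
supports of squarefree monomials not in `I`.  Thus `faceN G (j + 1)` is the
f-vector entry `f_j(δ_N(I))`, and trailing entries are `0`. -/
noncomputable def faceN {n : ℕ} (G : Finset (Finset (Fin n))) (d : ℕ) : ℕ :=
  Nat.card {T : Finset (Fin n) | T.card = d ∧ ¬ memIdeal G T}

/-- `faceF G d` is the number of faces of cardinality `d` (i.e. of dimension
`d - 1`) of the facet complex `δ_F(I)`, whose faces are the subsets of the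
supports of the minimal generators.  Thus `faceF G (j + 1)` is the f-vector
entry `f_j(δ_F(I))`, and trailing entries are `0`. -/
noncomputable def faceF {n : ℕ} (G : Finset (Finset (Fin n))) (d : ℕ) : ℕ :=
  Nat.card {T : Finset (Fin n) | T.card = d ∧ ∃ S ∈ G, T ⊆ S}

/-- `I` is an f-ideal iff `δ_N(I)` and `δ_F(I)` have the same f-vector. -/
def IsFIdeal {n : ℕ} (G : Finset (Finset (Fin n))) : Prop :=
  ∀ d : ℕ, faceN G d = faceF G d

lemma natCard_compl {n d : ℕ} (hd : d ≤ n) (P : Finset (Fin n) → Prop) :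
    Nat.card {T : Finset (Fin n) | T.card = d ∧ P T} =
    Nat.card {T : Finset (Fin n) | T.card = n - d ∧ P Tᶜ} :=
  Nat.card_congr
    { toFun := fun ⟨T, h⟩ => ⟨Tᶜ, by
        obtain ⟨h1, h2⟩ := h
        refine ⟨?_, by simpa using h2⟩
        simp [Finset.card_compl, h1]
      ⟩
      invFun := fun ⟨U, h⟩ => ⟨Uᶜ, by
        obtain ⟨h1, h2⟩ := h
        refine ⟨?_, h2⟩
        simp [Finset.card_compl, h1, Nat.sub_sub_self hd]
      ⟩
      left_inv := fun ⟨T, h⟩ => by simp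
      right_inv := fun ⟨U, h⟩ => by simp }

lemma natCard_add {n d : ℕ} (P : Finset (Fin n) → Prop) :
    Nat.card {T : Finset (Fin n) | T.card = d ∧ P T} +
    Nat.card {T : Finset (Fin n) | T.card = d ∧ ¬ P T} = n.choose d := by
  rw [Nat.card_coe_set_eq, Nat.card_coe_set_eq, ← Set.ncard_union_eq ?_
    (Set.toFinite _) (Set.toFinite _)]
  · have h2 : {T : Finset (Fin n) | T.card = d ∧ P T} ∪
        {T : Finset (Fin n) | T.card = d ∧ ¬ P T} =
        ↑(Finset.powersetCard d (Finset.univ : Finset (Fin n))) := by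
      ext T
      simp only [Set.mem_union, Set.mem_setOf_eq, Finset.mem_coe,
        Finset.mem_powersetCard]
      constructor
      · rintro (⟨h, _⟩ | ⟨h, _⟩) <;> exact ⟨Finset.subset_univ T, h⟩
      · rintro ⟨-, h⟩
        by_cases hp : P T
        · exact Or.inl ⟨h, hp⟩
        · exact Or.inr ⟨h, hp⟩
    rw [h2, Set.ncard_coe_finset, Finset.card_powersetCard, Finset.card_univ,
      Fintype.card_fin]
  · rw [Set.disjoint_left]
    rintro T ⟨-, hp⟩ ⟨-, hnp⟩
    exact hnp hp

lemma complSubsetComm {n : ℕ} {S T : Finset (Fin n)} : Sᶜ ⊆ T ↔ Tᶜ ⊆ S := by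
  constructor <;> intro h x hx <;> by_contra hc <;>
    exact (Finset.mem_compl.mp hx) (h (Finset.mem_compl.mpr hc))

lemma subsetComplComm {n : ℕ} {S T : Finset (Fin n)} : T ⊆ Sᶜ ↔ S ⊆ Tᶜ := by
  constructor <;> intro h x hx <;> rw [Finset.mem_compl] <;> intro hc <;>
    exact Finset.mem_compl.mp (h hc) hx

lemma natCard_zero {n d : ℕ} (h : n < d) (Q : Finset (Fin n) → Prop) :
    Nat.card {T : Finset (Fin n) | T.card = d ∧ Q T} = 0 := by
  have he : {T : Finset (Fin n) | T.card = d ∧ Q T} = ∅ := by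
    ext T
    simp only [Set.mem_setOf_eq, Set.mem_empty_iff_false, iff_false, not_and]
    intro hT _
    have hc : T.card ≤ n := by simpa using T.card_le_univ
    omega
  rw [he]
  simp

lemma mem_ncDual {n : ℕ} (G : Finset (Finset (Fin n))) (T : Finset (Fin n)) :
    memIdeal (ncDual G) T ↔ ∃ S ∈ G, Tᶜ ⊆ S := by
  unfold memIdeal ncDual
  constructor
  · rintro ⟨S', hS', hsub⟩
    obtain ⟨S, hS, rfl⟩ := Finset.mem_image.mp hS'
    exact ⟨S, hS, complSubsetComm.mp hsub⟩
  · rintro ⟨S, hS, hsub⟩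
    exact ⟨Sᶜ, Finset.mem_image_of_mem _ hS, complSubsetComm.mpr hsub⟩

lemma key1 {n : ℕ} (G : Finset (Finset (Fin n))) {d : ℕ} (hd : d ≤ n) :
    faceN (ncDual G) d + faceF G (n - d) = n.choose (n - d) := by
  have hset : {T : Finset (Fin n) | T.card = d ∧ ¬ memIdeal (ncDual G) T} =
      {T : Finset (Fin n) | T.card = d ∧ ¬ ∃ S ∈ G, Tᶜ ⊆ S} := by
    ext T
    rw [Set.mem_setOf_eq, Set.mem_setOf_eq, mem_ncDual]
  unfold faceN
  rw [hset, natCard_compl hd]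
  simp only [compl_compl]
  rw [add_comm]
  exact natCard_add (fun U => ∃ S ∈ G, U ⊆ S)

lemma key2 {n : ℕ} (G : Finset (Finset (Fin n))) {d : ℕ} (hd : d ≤ n) :
    faceF (ncDual G) d + faceN G (n - d) = n.choose (n - d) := by
  have hset : {T : Finset (Fin n) | T.card = d ∧ ∃ S ∈ ncDual G, T ⊆ S} =
      {T : Finset (Fin n) | T.card = d ∧ ∃ S ∈ G, S ⊆ Tᶜ} := by
    ext T
    rw [Set.mem_setOf_eq, Set.mem_setOf_eq]
    refine and_congr_right fun _ => ⟨?_, ?_⟩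
    · rintro ⟨S', hS', hsub⟩
      obtain ⟨S, hS, rfl⟩ := Finset.mem_image.mp hS'
      exact ⟨S, hS, subsetComplComm.mp hsub⟩
    · rintro ⟨S, hS, hsub⟩
      exact ⟨Sᶜ, Finset.mem_image_of_mem _ hS, subsetComplComm.mpr hsub⟩
  unfold faceF
  rw [hset, natCard_compl hd]
  simp only [compl_compl]
  have h2 := natCard_add (fun U : Finset (Fin n) => memIdeal G U) (d := n - d)
  unfold faceN
  simp only [memIdeal] at h2 ⊢
  omega

/-- Main theorem: a squarefree monomial ideal `I` of `k[x₁,…,xₙ]` is an f-ideal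
iff its Newton complementary dual `Î` is an f-ideal. -/
theorem isFIdeal_iff_isFIdeal_ncDual {n : ℕ} (G : Finset (Finset (Fin n)))
    (hG : IsAntichain (· ⊆ ·) (G : Set (Finset (Fin n)))) :
    IsFIdeal G ↔ IsFIdeal (ncDual G) := by
  constructor
  · intro h d
    by_cases hd : d ≤ n
    · have k1 := key1 G hd
      have k2 := key2 G hd
      have := h (n - d)
      omega
    · rw [faceN, faceF, natCard_zero (by omega), natCard_zero (by omega)]
  · intro h e
    by_cases he : e ≤ n
    · have hd : n - e ≤ n := Nat.sub_le _ _
      have k1 := key1 G hd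
      have k2 := key2 G hd
      rw [Nat.sub_sub_self he] at k1 k2
      have := h (n - e)
      omega
    · rw [faceN, faceF, natCard_zero (by omega), natCard_zero (by omega)]
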